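/- Let G be a connected simple graph with diameter d and let p ≠ 0 be a real number. If the p-Sombor matrix S_p(G) has exactly k distinct eigenvalues, then k ≥ d + 1. -/

import Mathlib

/-!
A real symmetric matrix is annihilated by `∏ (X - μ)` over its `k` distinct eigenvalues, so each
of its powers is a linear combination of `1, S, …, S ^ (k - 1)`. The entries of `S = S_p(G)` are
nonnegative and positive exactly on the edges, so `(S ^ m) u v = 0` for `m < dist u v`, while
`(S ^ dist u v) u v > 0`. For `u, v` at distance `diam G`, the assumption `k ≤ diam G` would
express `S ^ diam G` through powers all vanishing at `(u, v)`.
-/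

open Finset

/-- The `p`-Sombor matrix of a simple graph `G` on vertices `{0, …, n-1}`:
its `(i,j)` entry is `((d i)^p + (d j)^p)^(1/p)` when `i ~ j`, and `0` otherwise. -/
noncomputable def somborMatrix (n : ℕ) (G : SimpleGraph (Fin n)) [DecidableRel G.Adj]
    (p : ℝ) : Matrix (Fin n) (Fin n) ℝ :=
  Matrix.of fun i j =>
    if G.Adj i j then ((G.degree i : ℝ) ^ p + (G.degree j : ℝ) ^ p) ^ (1 / p) else 0

/-- Sum of a symmetric weight `f` over the edges of `G`
(each unordered edge counted once). -/
noncomputable def edgeSum (n : ℕ) (G : SimpleGraph (Fin n)) [DecidableRel G.Adj]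
    (f : Fin n → Fin n → ℝ) : ℝ :=
  (1 / 2) * ∑ i, ∑ j, if G.Adj i j then f i j else 0

/-- The `p`-Sombor index `SO_p(G) = ∑_{ij ∈ E(G)} ((d i)^p + (d j)^p)^(1/p)`. -/
noncomputable def somborIndex (n : ℕ) (G : SimpleGraph (Fin n)) [DecidableRel G.Adj]
    (p : ℝ) : ℝ :=
  edgeSum n G fun i j => ((G.degree i : ℝ) ^ p + (G.degree j : ℝ) ^ p) ^ (1 / p)

open Polynomial

theorem Matrix.IsHermitian.aeval_prod_X_sub_C_eigenvalues {n 𝕜 : Type*} [RCLike 𝕜] [Fintype n]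
    [DecidableEq n] {A : Matrix n n 𝕜} (hA : A.IsHermitian) :
    aeval A (∏ μ ∈ univ.image hA.eigenvalues, (X - C μ)) = 0 := by
  rw [← cfc_polynomial _ A hA.isSelfAdjoint, ← cfc_zero ℝ A]
  refine cfc_congr fun x hx => ?_
  obtain ⟨i, rfl⟩ := hA.spectrum_real_eq_range_eigenvalues ▸ hx
  simp only [eval_prod, eval_sub, eval_X, eval_C, Pi.zero_apply]
  exact prod_eq_zero (mem_image_of_mem _ (mem_univ i)) (sub_self _)

namespace SimpleGraph

variable {V R : Type*} [Fintype V] [DecidableEq V] {G : SimpleGraph V} {A : Matrix V V R}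

theorem exists_walk_length_eq_of_pow_apply_ne_zero [Semiring R]
    (hA : ∀ i j, ¬ G.Adj i j → A i j = 0) {m : ℕ} {i j : V} (h : (A ^ m) i j ≠ 0) :
    ∃ w : G.Walk i j, w.length = m := by
  induction m generalizing i with
  | zero =>
    obtain rfl : i = j := by by_contra hij; exact h (Matrix.one_apply_ne hij)
    exact ⟨.nil, rfl⟩
  | succ m ih =>
    rw [pow_succ', Matrix.mul_apply] at h
    obtain ⟨x, -, hx⟩ := exists_ne_zero_of_sum_ne_zero h
    have hix : G.Adj i x := by_contra fun hix => hx (by rw [hA i x hix, zero_mul])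
    obtain ⟨w, hw⟩ := ih (right_ne_zero_of_mul hx)
    exact ⟨.cons hix w, by rw [Walk.length_cons, hw]⟩

theorem pow_apply_eq_zero_of_lt_dist [Semiring R]
    (hA : ∀ i j, ¬ G.Adj i j → A i j = 0) {m : ℕ} {i j : V} (h : m < G.dist i j) :
    (A ^ m) i j = 0 := by
  by_contra hne
  obtain ⟨w, rfl⟩ := exists_walk_length_eq_of_pow_apply_ne_zero hA hne
  exact (dist_le w).not_gt h

section StrictOrderedRing

variable [CommRing R] [LinearOrder R] [IsStrictOrderedRing R]

theorem pow_length_apply_pos (hA : ∀ i j, 0 ≤ A i j) (hAdj : ∀ i j, G.Adj i j → 0 < A i j)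
    {i j : V} (w : G.Walk i j) : 0 < (A ^ w.length) i j := by
  induction w with
  | nil => simp
  | @cons i x j hix w ih =>
    rw [Walk.length_cons, pow_succ', Matrix.mul_apply]
    exact sum_pos' (fun y _ => mul_nonneg (hA i y) (Matrix.pow_apply_nonneg hA _ y j))
      ⟨x, mem_univ x, mul_pos (hAdj i x hix) ih⟩

theorem dist_lt_natDegree_of_aeval_eq_zero (hA0 : ∀ i j, ¬ G.Adj i j → A i j = 0)
    (hA : ∀ i j, 0 ≤ A i j) (hAdj : ∀ i j, G.Adj i j → 0 < A i j) {q : R[X]} (hq : q.Monic)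
    (hqA : aeval A q = 0) {u v : V} (huv : G.Reachable u v) : G.dist u v < q.natDegree := by
  by_contra! hle
  have hq1 : q ≠ 1 := by
    rintro rfl
    simpa using congr_fun₂ hqA u u
  set r := X ^ G.dist u v %ₘ q
  have hpow : A ^ G.dist u v = ∑ i ∈ range q.natDegree, r.coeff i • A ^ i := by
    rw [← aeval_eq_sum_range' (natDegree_modByMonic_lt _ hq hq1),
      aeval_modByMonic_eq_self_of_root hqA, aeval_X_pow]
  obtain ⟨w, hw⟩ := huv.exists_walk_length_eq_dist
  have hpos := pow_length_apply_pos hA hAdj w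
  rw [hw, hpow, Matrix.sum_apply] at hpos
  refine hpos.ne' (sum_eq_zero fun i hi => ?_)
  rw [Matrix.smul_apply, pow_apply_eq_zero_of_lt_dist hA0 ((mem_range.mp hi).trans_le hle),
    smul_zero]

end StrictOrderedRing

end SimpleGraph

section somborMatrix

variable {n : ℕ} {G : SimpleGraph (Fin n)} [DecidableRel G.Adj] {p : ℝ}

theorem somborMatrix_apply_eq_zero {i j : Fin n} (h : ¬ G.Adj i j) :
    somborMatrix n G p i j = 0 := by
  simp [somborMatrix, h]

theorem somborMatrix_apply_nonneg (i j : Fin n) : 0 ≤ somborMatrix n G p i j := by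
  simp only [somborMatrix, Matrix.of_apply]
  split_ifs <;> positivity

theorem somborMatrix_apply_pos {i j : Fin n} (h : G.Adj i j) : 0 < somborMatrix n G p i j := by
  have hi : (0 : ℝ) < G.degree i := Nat.cast_pos.mpr (G.degree_pos_iff_exists_adj i |>.mpr ⟨j, h⟩)
  simp only [somborMatrix, Matrix.of_apply, if_pos h]
  positivity

end somborMatrix

theorem somborMatrix_distinct_eigenvalues_ge_diam_general (n : ℕ) (G : SimpleGraph (Fin n))
    [DecidableRel G.Adj] (hconn : G.Connected)
    (p : ℝ) (hS : (somborMatrix n G p).IsHermitian) (k : ℕ)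
    (hk : (Finset.univ.image hS.eigenvalues).card = k) :
    G.diam + 1 ≤ k := by
  have := hconn.nonempty
  obtain ⟨u, v, huv⟩ := G.exists_dist_eq_diam
  have hdist := G.dist_lt_natDegree_of_aeval_eq_zero (fun _ _ => somborMatrix_apply_eq_zero)
    somborMatrix_apply_nonneg (fun _ _ => somborMatrix_apply_pos)
    (monic_prod_of_monic _ _ fun μ _ => monic_X_sub_C μ) hS.aeval_prod_X_sub_C_eigenvalues
    (hconn u v)
  rwa [natDegree_finsetProd_X_sub_C_eq_card, hk, huv] at hdist

/-- For a connected graph of diameter `d`, if the `p`-Sombor matrix has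
exactly `k` distinct eigenvalues, then `k ≥ d + 1`. -/
theorem somborMatrix_distinct_eigenvalues_ge_diam (n : ℕ) (G : SimpleGraph (Fin n))
    [DecidableRel G.Adj] (hconn : G.Connected) (hdeg : ∀ i : Fin n, 0 < G.degree i)
    (p : ℝ) (hp : p ≠ 0) (hS : (somborMatrix n G p).IsHermitian) (k : ℕ)
    (hk : (Finset.univ.image hS.eigenvalues).card = k) :
    G.diam + 1 ≤ k :=
  somborMatrix_distinct_eigenvalues_ge_diam_general n G hconn p hS k hk
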